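/- Let x_0 > x_1 > ... > x_ℓ be positive integers and t_i = x_{i-1} − x_i with t_i ≤ x_{i-1}/2 and t_i ≤ 4(a+1)/x_{i-1} for all i, for some a ≥ 0. Then the sum over i of t_i(x_{i-1} − t_i) is at least (x_0^2 − x_ℓ^2)/2 − 4(a+1)·log(x_0/x_ℓ). -/

import Mathlib

/-- A colouring `c` of the edges of the complete graph on `Fin n` contains a rainbow copy
of `H` via the embedding `f` if the edges of `H` get pairwise distinct colours. -/
def IsRainbowCopy {α β : Type*} {n : ℕ} (H : SimpleGraph α) (c : Sym2 (Fin n) → β)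
    (f : α ↪ Fin n) : Prop :=
  ∀ a b a' b', H.Adj a b → H.Adj a' b' →
    c s(f a, f b) = c s(f a', f b') → s(a, b) = s(a', b')

/-- The colouring `c` contains a rainbow copy of `H`. -/
def HasRainbow {α β : Type*} {n : ℕ} (H : SimpleGraph α) (c : Sym2 (Fin n) → β) : Prop :=
  ∃ f : α ↪ Fin n, IsRainbowCopy H c f

/-- The colouring `c` of `K_n` uses exactly `e i` edges of colour `i`. -/
def EdgeDistribution {n k : ℕ} (c : Sym2 (Fin n) → Fin k) (e : Fin k → ℕ) : Prop :=
  ∀ i : Fin k,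
    (Finset.univ.filter fun s : Sym2 (Fin n) => ¬ s.IsDiag ∧ c s = i).card = e i

/-- `gVal H k` is the least `N : ℕ∞` such that for every `n ≥ N` and every sequence
`(e_1, …, e_k)` of nonnegative integers summing to `C(n,2)` there is a rainbow `H`-free
colouring of `K_n` with exactly `e i` edges of colour `i`; it equals `⊤` when no finite
such `N` exists. -/
noncomputable def gVal {α : Type*} (H : SimpleGraph α) (k : ℕ) : ℕ∞ :=
  sInf {N : ℕ∞ | ∀ n : ℕ, N ≤ (n : ℕ∞) → ∀ e : Fin k → ℕ, (∑ i, e i) = n.choose 2 →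
    ∃ c : Sym2 (Fin n) → Fin k, EdgeDistribution c e ∧ ¬ HasRainbow H c}

lemma key16 (u v : ℕ) (a : ℝ) (ha : 0 ≤ a) (hv : 0 < v) (hlt : v < u)
    (hs : ((u - v : ℕ) : ℝ) ≤ 4 * (a + 1) / (u : ℝ)) :
    ((u : ℝ) ^ 2 - (v : ℝ) ^ 2) / 2 - 4 * (a + 1) * Real.log ((u : ℝ) / (v : ℝ))
      ≤ ((u - v : ℕ) : ℝ) * ((u : ℝ) - ((u - v : ℕ) : ℝ)) := by
  have hc : ((u - v : ℕ) : ℝ) = (u : ℝ) - (v : ℝ) := by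
    push_cast [Nat.cast_sub hlt.le]; ring
  rw [hc]
  set t : ℝ := (u : ℝ) - (v : ℝ) with ht
  have hvu : (0 : ℝ) < u := by exact_mod_cast hv.trans hlt
  have hvv : (0 : ℝ) < v := by exact_mod_cast hv
  have htpos : 0 < t := by
    have : (v : ℝ) < (u : ℝ) := by exact_mod_cast hlt
    linarith
  have hlog : t / u ≤ Real.log ((u : ℝ) / v) := by
    have h1 : Real.log ((v : ℝ) / u) ≤ (v : ℝ) / u - 1 :=
      Real.log_le_sub_one_of_pos (by positivity)
    have h2 : Real.log ((v : ℝ) / u) = - Real.log ((u : ℝ) / v) := by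
      rw [Real.log_div (ne_of_gt hvv) (ne_of_gt hvu),
        Real.log_div (ne_of_gt hvu) (ne_of_gt hvv)]; ring
    have h3 : 1 - (v : ℝ) / u ≤ Real.log ((u : ℝ) / v) := by linarith [h2 ▸ h1]
    have h4 : t / u = 1 - (v : ℝ) / u := by
      field_simp
      exact ht
    linarith [h4 ▸ h3]
  have hmain : t ^ 2 / 2 ≤ 4 * (a + 1) * Real.log ((u : ℝ) / v) := by
    have h5 : t * t ≤ (4 * (a + 1) / u) * t :=
      mul_le_mul_of_nonneg_right (hc ▸ hs) htpos.le
    have h6 : (4 * (a + 1) / u) * t = 4 * (a + 1) * (t / u) := by ring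
    have h7 : 4 * (a + 1) * (t / u) ≤ 4 * (a + 1) * Real.log ((u : ℝ) / v) :=
      mul_le_mul_of_nonneg_left hlog (by linarith)
    nlinarith
  have hsq : (u : ℝ) ^ 2 - (v : ℝ) ^ 2 = t * ((u : ℝ) + v) := by ring
  nlinarith

/-- Let `x_0 > x_1 > ⋯ > x_ℓ` be positive integers, `t_i = x_{i-1} - x_i` with
`t_i ≤ x_{i-1}/2` and `t_i ≤ 4(a+1)/x_{i-1}` for all `i`, where `a ≥ 0`. Then
`∑ t_i (x_{i-1} - t_i) ≥ (x_0² - x_ℓ²)/2 - 4(a+1) log(x_0/x_ℓ)`. -/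
theorem stmt16 (l : ℕ) (x : ℕ → ℕ) (a : ℝ) (ha : 0 ≤ a)
    (hpos : ∀ i ≤ l, 0 < x i)
    (hdec : ∀ i < l, x (i + 1) < x i)
    (hhalf : ∀ i < l, 2 * (x i - x (i + 1)) ≤ x i)
    (hsmall : ∀ i < l, ((x i - x (i + 1) : ℕ) : ℝ) ≤ 4 * (a + 1) / (x i : ℝ)) :
    ((x 0 : ℝ) ^ 2 - (x l : ℝ) ^ 2) / 2
        - 4 * (a + 1) * Real.log ((x 0 : ℝ) / (x l : ℝ))
      ≤ ∑ i ∈ Finset.range l,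
          ((x i - x (i + 1) : ℕ) : ℝ) * ((x i : ℝ) - ((x i - x (i + 1) : ℕ) : ℝ)) := by
  induction l with
  | zero =>
    simp [div_self (ne_of_gt (show (0:ℝ) < (x 0 : ℝ) by exact_mod_cast hpos 0 le_rfl))]
  | succ l ih =>
    have hpos' : ∀ i ≤ l, 0 < x i := fun i hi => hpos i (hi.trans (Nat.le_succ l))
    have ih' := ih hpos' (fun i hi => hdec i (hi.trans (Nat.lt_succ_self l)))
      (fun i hi => hhalf i (hi.trans (Nat.lt_succ_self l)))
      (fun i hi => hsmall i (hi.trans (Nat.lt_succ_self l)))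
    rw [Finset.sum_range_succ]
    have hkey := key16 (x l) (x (l + 1)) a ha (hpos (l + 1) le_rfl)
      (hdec l (Nat.lt_succ_self l)) (hsmall l (Nat.lt_succ_self l))
    have hx0 : (0 : ℝ) < (x 0 : ℝ) := by exact_mod_cast hpos 0 (Nat.zero_le _)
    have hxl : (0 : ℝ) < (x l : ℝ) := by exact_mod_cast hpos l (Nat.le_succ l)
    have hxl1 : (0 : ℝ) < (x (l + 1) : ℝ) := by exact_mod_cast hpos (l + 1) le_rfl
    have hlogsplit : Real.log ((x 0 : ℝ) / (x (l + 1) : ℝ))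
        = Real.log ((x 0 : ℝ) / (x l : ℝ)) + Real.log ((x l : ℝ) / (x (l + 1) : ℝ)) := by
      rw [Real.log_div (ne_of_gt hx0) (ne_of_gt hxl1),
        Real.log_div (ne_of_gt hx0) (ne_of_gt hxl),
        Real.log_div (ne_of_gt hxl) (ne_of_gt hxl1)]
      ring
    rw [hlogsplit]
    linarith
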